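/- Let d ≥ 1, m = 2d, and k ∈ ℝ^d, and let Λ_k = Σ_{a∈Fin m} e^{−i k·e(a)} P_a be the diagonal operator of phases on ℂ^m. Then for every n ≥ 1, (Λ_k C_G)^n |s⟩ = ((−1)^{n+1} / m^{(2n−1)/2}) · Σ_{(a_1,…,a_n)∈(Fin m)^n} e^{−i k·(e(a_1)+⋯+e(a_n))} · Ξ₀(a_1,…,a_n) · |a_1⟩, where Ξ₀(a_1,…,a_n) = ∏_{j=1}^{n−1} (m·δ_{a_j,a_{j+1}} − 2). -/

import Mathlib

noncomputable section

open scoped BigOperators RealInnerProductSpace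

/-- The complex Euclidean space `ℂ^m`. -/
abbrev H (m : ℕ) := EuclideanSpace ℂ (Fin m)

/-- The computational orthonormal basis vector `|a⟩`. -/
def ket {m : ℕ} (a : Fin m) : H m := EuclideanSpace.single a 1

/-- The uniform superposition `|s⟩ = (1/√m) Σ_a |a⟩`. -/
def ketS (m : ℕ) : H m := ((Real.sqrt m : ℂ))⁻¹ • ∑ a : Fin m, ket a

/-- The outer product `|x⟩⟨y|`, i.e. `v ↦ ⟪y, v⟫ • x`. -/
def outer {m : ℕ} (x y : H m) : H m →L[ℂ] H m := (innerSL ℂ y).smulRight x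

/-- The projection `P_a = |a⟩⟨a|`. -/
def P {m : ℕ} (a : Fin m) : H m →L[ℂ] H m := outer (ket a) (ket a)

/-- The Grover coin `C_G = 2|s⟩⟨s| - 1`. -/
def groverC (m : ℕ) : H m →L[ℂ] H m := (2 : ℂ) • outer (ketS m) (ketS m) - 1

/-- `Ξ₀(a_1, …, a_n) = ∏_{j=1}^{n-1} (m δ_{a_j, a_{j+1}} - 2)` (empty product is 1). -/
def Xi0 (m n : ℕ) (a : Fin n → Fin m) : ℂ :=
  ∏ j : Fin n, if h : (j : ℕ) + 1 < n then
    ((m : ℂ) * (if a j = a ⟨(j : ℕ) + 1, h⟩ then 1 else 0) - 2) else 1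

/-- The `2d` signed standard basis vectors of `ℝ^d`:
`e(2k) = u_k` and `e(2k+1) = -u_k`. -/
def eR (d : ℕ) (a : Fin (2 * d)) : EuclideanSpace ℝ (Fin d) :=
  EuclideanSpace.single ⟨(a : ℕ) / 2, by have := a.2; omega⟩
    (if (a : ℕ) % 2 = 0 then 1 else -1)

/-- The diagonal phase operator `Λ_k = Σ_a e^{-i k·e(a)} P_a`. -/
def Lambda (d : ℕ) (k : EuclideanSpace ℝ (Fin d)) : H (2 * d) →L[ℂ] H (2 * d) :=
  ∑ a : Fin (2 * d), Complex.exp (-Complex.I * (⟪k, eR d a⟫ : ℝ)) • P a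

/-!
Since `C_G |b⟩ = (2/√m)|s⟩ − |b⟩` and `Λ_k` is diagonal, one step of the walk acts on the basis as
`Λ_k C_G |b⟩ = −(1/m) Σ_c e^{−i k·e(c)} (m δ_{cb} − 2) |c⟩`, while `C_G |s⟩ = |s⟩` gives the case
`n = 1`. Applying one more step to the term `|a_1⟩` of the `n`-th power prepends a new index to
`(a_1, …, a_n)`: it contributes one more phase, the new factor `m δ − 2` of `Ξ₀` and a factor
`−1/m` to the prefactor. Only the diagonality of `Λ_k` enters, so the computation is done for an
arbitrary diagonal operator `D |a⟩ = φ a |a⟩`.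
-/

open Finset

lemma outer_apply {m : ℕ} (x y v : H m) : outer x y v = inner ℂ y v • x := rfl

lemma inner_ket_ket {m : ℕ} (a b : Fin m) :
    inner ℂ (ket a) (ket b) = if a = b then 1 else 0 := by
  simp [ket, EuclideanSpace.inner_single_left]

lemma inner_ketS_ket {m : ℕ} (a : Fin m) :
    inner ℂ (ketS m) (ket a) = (Real.sqrt m : ℂ)⁻¹ := by
  simp [ketS, inner_ket_ket]

lemma ofReal_sqrt_mul_self_natCast (m : ℕ) : (Real.sqrt m : ℂ) * Real.sqrt m = m := by
  rw [← Complex.ofReal_mul, Real.mul_self_sqrt m.cast_nonneg, Complex.ofReal_natCast]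

lemma inner_ketS_ketS {m : ℕ} [NeZero m] : inner ℂ (ketS m) (ketS m) = 1 := by
  have hm : (Real.sqrt m : ℂ) ≠ 0 := by simp [NeZero.ne m]
  conv_lhs => enter [3]; rw [ketS]
  simp only [inner_smul_right, inner_sum, inner_ketS_ket, sum_const, card_univ, Fintype.card_fin,
    nsmul_eq_mul, ← ofReal_sqrt_mul_self_natCast m]
  field_simp

lemma groverC_ketS {m : ℕ} [NeZero m] : groverC m (ketS m) = ketS m := by
  simp only [groverC, sub_apply, smul_apply, one_apply_eq_self, outer_apply, inner_ketS_ketS,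
    one_smul]
  module

lemma groverC_ket {m : ℕ} (a : Fin m) :
    groverC m (ket a) = (2 * (Real.sqrt m : ℂ)⁻¹) • ketS m - ket a := by
  simp only [groverC, sub_apply, smul_apply, one_apply_eq_self, outer_apply, inner_ketS_ket,
    smul_smul]

lemma Xi0_cons (m n : ℕ) (hn : 1 ≤ n) (b : Fin m) (a : Fin n → Fin m) :
    Xi0 m (n + 1) (Fin.cons b a) =
      ((m : ℂ) * (if b = a ⟨0, hn⟩ then 1 else 0) - 2) * Xi0 m n a := by
  rw [Xi0, Fin.prod_univ_succ, Xi0]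
  congr 1
  · rw [dif_pos (by simp; omega)]
    rfl
  · refine prod_congr rfl fun j _ => ?_
    by_cases hj : (j : ℕ) + 1 < n
    · rw [dif_pos (by simpa using hj), dif_pos hj]
      rfl
    · rw [dif_neg (by simpa using hj), dif_neg hj]

lemma prod_comp_cons {α M : Type*} [CommMonoid M] {n : ℕ} (f : α → M) (b : α) (a : Fin n → α) :
    ∏ j, f ((Fin.cons b a : Fin (n + 1) → α) j) = f b * ∏ j, f (a j) := by
  simp [Fin.prod_univ_succ]

lemma Xi0_one (m : ℕ) (a : Fin 1 → Fin m) : Xi0 m 1 a = 1 :=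
  prod_eq_one fun _ _ => dif_neg (by omega)

lemma neg_one_pow_div_sqrt_pow_succ {m : ℕ} [NeZero m] (n : ℕ) (hn : 1 ≤ n) :
    (-1 : ℂ) ^ (n + 1 + 1) / (Real.sqrt m : ℂ) ^ (2 * (n + 1) - 1)
      = (-1 : ℂ) ^ (n + 1) / (Real.sqrt m : ℂ) ^ (2 * n - 1) * (-(m : ℂ)⁻¹) := by
  have hm : (Real.sqrt m : ℂ) ≠ 0 := by simp [NeZero.ne m]
  rw [show 2 * (n + 1) - 1 = 2 * n - 1 + 2 by omega, pow_add _ (2 * n - 1), sq,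
    ← ofReal_sqrt_mul_self_natCast]
  field_simp
  ring

section Diagonal

variable {m : ℕ} {D : H m →L[ℂ] H m} {φ : Fin m → ℂ}

lemma apply_ketS_of_apply_ket (hD : ∀ a, D (ket a) = φ a • ket a) :
    D (ketS m) = (Real.sqrt m : ℂ)⁻¹ • ∑ b, φ b • ket b := by
  simp only [ketS, map_smul, map_sum, hD]

lemma sum_smul_ket_ite (a : Fin m) :
    ∑ b, (φ b * ((m : ℂ) * (if b = a then 1 else 0) - 2)) • ket b
      = (m * φ a) • ket a - (2 : ℂ) • ∑ b, φ b • ket b := by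
  simp only [mul_sub, sub_smul, sum_sub_distrib, mul_ite, mul_one, mul_zero, ite_smul, zero_smul,
    sum_ite_eq', mem_univ, if_true, smul_sum, smul_smul, mul_comm]

lemma mul_groverC_apply_ket [NeZero m] (hD : ∀ a, D (ket a) = φ a • ket a) (a : Fin m) :
    (D * groverC m) (ket a)
      = (-(m : ℂ)⁻¹) • ∑ b, (φ b * ((m : ℂ) * (if b = a then 1 else 0) - 2)) • ket b := by
  have hm : (m : ℂ) ≠ 0 := NeZero.ne _
  rw [mul_apply_eq_comp, groverC_ket, map_sub, map_smul, apply_ketS_of_apply_ket hD,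
    hD, sum_smul_ket_ite, smul_smul, mul_assoc, ← mul_inv, ofReal_sqrt_mul_self_natCast,
    smul_sub, smul_smul, smul_smul, neg_mul, inv_mul_cancel_left₀ hm]
  module

theorem mul_groverC_pow_apply_ketS [NeZero m] (hD : ∀ a, D (ket a) = φ a • ket a) (n : ℕ)
    (hn : 1 ≤ n) :
    ((D * groverC m) ^ n) (ketS m)
      = ((-1 : ℂ) ^ (n + 1) / (Real.sqrt m : ℂ) ^ (2 * n - 1)) •
          ∑ a : Fin n → Fin m, ((∏ j, φ (a j)) * Xi0 m n a) • ket (a ⟨0, hn⟩) := by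
  induction n, hn using Nat.le_induction with
  | base =>
    rw [pow_one, mul_apply_eq_comp, groverC_ketS, apply_ketS_of_apply_ket hD,
      ← (Equiv.funUnique (Fin 1) (Fin m)).symm.sum_comp]
    simp [Xi0_one]
  | succ n hn ih =>
    rw [pow_succ', mul_apply_eq_comp, ih, map_smul, map_sum]
    simp only [map_smul, mul_groverC_apply_ket hD, smul_sum, smul_smul]
    rw [sum_comm, ← (Fin.consEquiv fun _ => Fin m).sum_comp, Fintype.sum_prod_type,
      neg_one_pow_div_sqrt_pow_succ n hn]
    refine sum_congr rfl fun b _ => sum_congr rfl fun a _ => ?_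
    rw [show (Fin.consEquiv fun _ => Fin m) (b, a) = Fin.cons b a from rfl, prod_comp_cons,
      Xi0_cons m n hn]
    exact congrArg (· • ket b) (by ring)

end Diagonal

lemma Lambda_ket (d : ℕ) (k : EuclideanSpace ℝ (Fin d)) (b : Fin (2 * d)) :
    Lambda d k (ket b) = Complex.exp (-Complex.I * (⟪k, eR d b⟫ : ℝ)) • ket b := by
  simp [Lambda, P, outer_apply, inner_ket_ket]

lemma exp_neg_I_mul_inner_sum {d : ℕ} {ι : Type*} (s : Finset ι)
    (k : EuclideanSpace ℝ (Fin d)) (v : ι → EuclideanSpace ℝ (Fin d)) :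
    Complex.exp (-Complex.I * (⟪k, ∑ i ∈ s, v i⟫ : ℝ))
      = ∏ i ∈ s, Complex.exp (-Complex.I * (⟪k, v i⟫ : ℝ)) := by
  rw [inner_sum, Complex.ofReal_sum, mul_sum, Complex.exp_sum]

/-- Eq. (18) of the paper:
`(Λ_k C_G)^n |s⟩ = ((-1)^{n+1} / m^{(2n-1)/2})
  Σ_{(a_1,…,a_n)} e^{-i k·(e(a_1)+⋯+e(a_n))} Ξ₀(a) |a_1⟩` with `m = 2d`. -/
theorem lambda_grover_pow_ketS (d : ℕ) (k : EuclideanSpace ℝ (Fin d))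
    (n : ℕ) (hn : 1 ≤ n) :
    ((Lambda d k * groverC (2 * d)) ^ n) (ketS (2 * d))
      = ((-1 : ℂ) ^ (n + 1) / ((Real.sqrt (2 * d) : ℂ)) ^ (2 * n - 1)) •
          ∑ a : Fin n → Fin (2 * d),
            (Complex.exp (-Complex.I * ((⟪k, ∑ j : Fin n, eR d (a j)⟫ : ℝ))) *
              Xi0 (2 * d) n a) • ket (a ⟨0, by omega⟩) := by
  rcases d.eq_zero_or_pos with rfl | hd
  · ext i
    exact absurd i.2 (by omega)
  have : NeZero (2 * d) := ⟨by omega⟩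
  rw [mul_groverC_pow_apply_ketS (Lambda_ket d k) n hn]
  simp only [exp_neg_I_mul_inner_sum, Nat.cast_mul, Nat.cast_ofNat]
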